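/- Let q = 3^r, λ the canonical additive character of F_q, and D a finite set with a function Tr : D → F_q such that Σ_{w∈D} λ(a·Tr w) = λ(a)·A·K(λ;a²) for all a ∈ F_q* and some constant A, with |D| = A·B. Then for each β ∈ F_q, the counting function N_D(β) = |{w ∈ D : Tr w = β}| satisfies q·N_D(β) = A·B + A·(q·δ(1,q;β−1) − q + 1), where δ(1,q;γ) = |{α∈F_q* : α + α⁻¹ = γ}|. -/

import Mathlib

open Finset
open scoped Classical

/-- The Kloosterman sum `K(ψ;b) = ∑_{α ∈ F*} ψ(α + b α⁻¹)`. -/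
noncomputable def Kl {F : Type} [Field F] [Fintype F] (ψ : F → ℂ) (b : F) : ℂ :=
  ∑ α : Fˣ, ψ ((α : F) + b * (α : F)⁻¹)

/-- The canonical additive character of a field of characteristic 3. -/
noncomputable def canChar {F : Type} [Field F] [Fintype F] [Algebra (ZMod 3) F] (x : F) : ℂ :=
  Complex.exp (2 * Real.pi * Complex.I * ((Algebra.trace (ZMod 3) F x).val : ℂ) / 3)

/-- `δ(1,q;γ) = |{α ∈ F* : α + α⁻¹ = γ}|`. -/
noncomputable def delta1 {F : Type} [Field F] [Fintype F] (γ : F) : ℕ :=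
  (Finset.univ.filter (fun α : Fˣ => (α : F) + (α : F)⁻¹ = γ)).card

/-!
Detect `Tr w = β` by orthogonality of a primitive additive character `ψ`:
`q · N_D(β) = ∑_a ψ(-aβ) ∑_w ψ(a · Tr w)`. The term `a = 0` gives `|D|`; for `a ≠ 0` the
hypothesis and the substitution `α ↦ aα` in `K(ψ; a²)` turn the inner sum into
`A ∑_{α ∈ F*} ψ(a(α + α⁻¹ - (β - 1)))`, and summing over `a ≠ 0` first leaves `q - 1` for each
`α` with `α + α⁻¹ = β - 1` and `-1` for every other `α`.
-/

namespace AddChar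

section Trace

variable (p : ℕ) [Fact p.Prime] (F : Type*) [Field F] [Algebra (ZMod p) F]

noncomputable def traceAddChar : AddChar F ℂ :=
  ZMod.stdAddChar.compAddMonoidHom (Algebra.trace (ZMod p) F).toAddMonoidHom

theorem isPrimitive_traceAddChar [Finite F] : (traceAddChar p F).IsPrimitive := by
  refine IsPrimitive.of_ne_one (ne_one_iff.mpr ?_)
  have : Algebra.IsAlgebraic (ZMod p) F := Algebra.IsAlgebraic.of_finite _ _
  obtain ⟨x, hx⟩ := Algebra.trace_surjective (ZMod p) F 1
  refine ⟨x, fun h => one_ne_zero (ZMod.injective_stdAddChar (N := p) ?_)⟩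
  simpa [traceAddChar, hx] using h

end Trace

theorem coe_traceAddChar_three {F : Type} [Field F] [Fintype F] [Algebra (ZMod 3) F] :
    ⇑(traceAddChar 3 F) = canChar := by
  ext x
  simp [traceAddChar, canChar, ZMod.stdAddChar_apply, ZMod.toCircle_apply]

end AddChar

section KloostermanCount

variable {F : Type} [Field F] [Fintype F] {ψ : AddChar F ℂ}

theorem sum_erase_zero_mulShift (hψ : ψ.IsPrimitive) (b : F) :
    ∑ a ∈ univ.erase 0, ψ (a * b) = (if b = 0 then (Fintype.card F : ℂ) else 0) - 1 := by
  rw [sum_erase_eq_sub (mem_univ _), AddChar.sum_mulShift b hψ, zero_mul,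
    AddChar.map_zero_eq_one]
  push_cast
  rfl

theorem card_mul_card_filter_eq (hψ : ψ.IsPrimitive) {D : Type} [Fintype D] (f : D → F)
    (β : F) :
    (Fintype.card F : ℂ) * (#{w | f w = β} : ℂ)
      = Fintype.card D + ∑ a ∈ univ.erase 0, ψ (-(a * β)) * ∑ w, ψ (a * f w) := by
  have hsum : ∑ a : F, ψ (-(a * β)) * ∑ w, ψ (a * f w)
      = ∑ w, ((if f w - β = 0 then Fintype.card F else 0 : ℕ) : ℂ) := by
    simp_rw [mul_sum, ← AddChar.map_add_eq_mul]
    rw [sum_comm]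
    refine sum_congr rfl fun w _ => ?_
    rw [← AddChar.sum_mulShift _ hψ]
    exact sum_congr rfl fun a _ => congrArg ψ (by ring)
  rw [← add_sum_erase _ _ (mem_univ 0)] at hsum
  simp only [zero_mul, neg_zero, AddChar.map_zero_eq_one, one_mul, sum_const, card_univ,
    nsmul_eq_mul, mul_one, sub_eq_zero] at hsum
  rw [hsum]
  push_cast
  rw [sum_ite, sum_const_zero, add_zero, sum_const, nsmul_eq_mul, mul_comm]

theorem Kl_sq_eq_sum_units_add_inv (a : F) (ha : a ≠ 0) :
    Kl ψ (a ^ 2) = ∑ α : Fˣ, ψ (a * ((α : F) + (α : F)⁻¹)) := by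
  refine (Fintype.sum_equiv (Equiv.mulLeft (Units.mk0 a ha)) _ _ fun α => ?_).symm
  simp only [Equiv.coe_mulLeft, Units.val_mul, Units.val_mk0]
  congr 1
  field_simp

theorem sum_erase_zero_mul_Kl_sq (hψ : ψ.IsPrimitive) (γ : F) :
    ∑ a ∈ univ.erase 0, ψ (-(a * γ)) * Kl ψ (a ^ 2)
      = Fintype.card F * delta1 γ - (Fintype.card F - 1) := by
  have h : ∀ a ∈ univ.erase (0 : F), ψ (-(a * γ)) * Kl ψ (a ^ 2)
      = ∑ α : Fˣ, ψ (a * ((α : F) + (α : F)⁻¹ - γ)) := fun a ha => by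
    rw [Kl_sq_eq_sum_units_add_inv a (ne_of_mem_erase ha), mul_sum]
    exact sum_congr rfl fun α _ => by rw [← AddChar.map_add_eq_mul]; ring_nf
  rw [sum_congr rfl h, sum_comm]
  simp_rw [sum_erase_zero_mulShift hψ, sub_eq_zero, sum_sub_distrib, sum_ite, sum_const_zero,
    sum_const, card_univ, Fintype.card_units, delta1]
  simp [Nat.cast_sub Fintype.card_pos, mul_comm]

end KloostermanCount

theorem card_mul_card_filter_eq_of_sum_eq_mul_Kl {F : Type} [Field F] [Fintype F]
    {ψ : AddChar F ℂ} (hψ : ψ.IsPrimitive) {D : Type} [Fintype D] (Tr : D → F) (A : ℂ)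
    (hyp : ∀ a : F, a ≠ 0 → ∑ w : D, ψ (a * Tr w) = ψ a * A * Kl ψ (a ^ 2)) (β : F) :
    (Fintype.card F : ℂ) * (#{w | Tr w = β} : ℂ)
      = Fintype.card D + A * (Fintype.card F * delta1 (β - 1) - Fintype.card F + 1) := by
  have h : ∀ a ∈ univ.erase (0 : F), ψ (-(a * β)) * ∑ w, ψ (a * Tr w)
      = A * (ψ (-(a * (β - 1))) * Kl ψ (a ^ 2)) := fun a ha => by
    have hshift : ψ (-(a * β)) * ψ a = ψ (-(a * (β - 1))) := by
      rw [← AddChar.map_add_eq_mul]; ring_nf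
    rw [hyp a (ne_of_mem_erase ha), ← hshift]
    ring
  rw [card_mul_card_filter_eq hψ, sum_congr rfl h, ← mul_sum, sum_erase_zero_mul_Kl_sq hψ]
  ring

theorem stmt16_general {F : Type} [Field F] [Fintype F] [Algebra (ZMod 3) F]
    (D : Type) [Fintype D] (Tr : D → F) (A B : ℂ)
    (hyp : ∀ a : F, a ≠ 0 →
      ∑ w : D, canChar (a * Tr w) = canChar a * A * Kl canChar (a ^ 2))
    (hDcard : (Fintype.card D : ℂ) = A * B)
    (β : F) :
    (Fintype.card F : ℂ) * ((Finset.univ.filter (fun w : D => Tr w = β)).card : ℂ)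
      = A * B + A * ((Fintype.card F : ℂ) * (delta1 (β - 1) : ℂ)
          - (Fintype.card F : ℂ) + 1) := by
  rw [← AddChar.coe_traceAddChar_three] at hyp
  rw [← hDcard]
  exact card_mul_card_filter_eq_of_sum_eq_mul_Kl (AddChar.isPrimitive_traceAddChar 3 F) Tr A hyp β

theorem stmt16 {F : Type} [Field F] [Fintype F] [Algebra (ZMod 3) F]
    (r : ℕ) (hr : 0 < r) (hcard : Fintype.card F = 3 ^ r)
    (D : Type) [Fintype D] (Tr : D → F) (A B : ℂ)
    (hyp : ∀ a : F, a ≠ 0 →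
      ∑ w : D, canChar (a * Tr w) = canChar a * A * Kl canChar (a ^ 2))
    (hDcard : (Fintype.card D : ℂ) = A * B)
    (β : F) :
    (Fintype.card F : ℂ) * ((Finset.univ.filter (fun w : D => Tr w = β)).card : ℂ)
      = A * B + A * ((Fintype.card F : ℂ) * (delta1 (β - 1) : ℂ)
          - (Fintype.card F : ℂ) + 1) :=
  stmt16_general D Tr A B hyp hDcard β
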